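/- If ν_s(G(Γ)) = n+m, then Γ is satisfiable; moreover, there is a maximum induced matching M of G(Γ) containing, for each i ∈ [n], either u_i f_i or u_i t_i, and the truth assignment t with t(x_i) = 0 if u_i f_i ∈ M and t(x_i) = 1 if u_i t_i ∈ M satisfies Γ. -/

import Mathlib

open SimpleGraph

/-- The subgraph of `G` consisting of those pairs in `s` that are actually edges of `G`. -/
def pairsSubgraph {V : Type*} (G : SimpleGraph V) (s : Set (V × V)) : G.Subgraph where
  verts := {v | ∃ a b, (G.Adj a b ∧ ((a, b) ∈ s ∨ (b, a) ∈ s)) ∧ (v = a ∨ v = b)}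
  Adj a b := G.Adj a b ∧ ((a, b) ∈ s ∨ (b, a) ∈ s)
  adj_sub h := h.1
  edge_vert h := ⟨_, _, h, Or.inl rfl⟩
  symm := ⟨fun _ _ h => ⟨h.1.symm, h.2.symm⟩⟩

/-- `M` is an induced matching in `G`: it is a matching, and `G(M)`, the subgraph of `G`
induced by the set `V(M)` of covered vertices (which is `M.verts` for a matching subgraph),
is `1`-regular, i.e. every vertex of `G(M)` has exactly one neighbour in `G(M)`. -/
def IsInducedMatching {V : Type*} (G : SimpleGraph V) (M : G.Subgraph) : Prop :=
  M.IsMatching ∧ ∀ v : M.verts, ∃! w : M.verts, (G.induce M.verts).Adj v w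

/-- `M` is an acyclic matching in `G`: it is a matching and `G(M)` is a forest. -/
def IsAcyclicMatching {V : Type*} (G : SimpleGraph V) (M : G.Subgraph) : Prop :=
  M.IsMatching ∧ (G.induce M.verts).IsAcyclic

/-- `M` is a uniquely restricted matching in `G`: it is a matching and it is the unique
perfect matching of `G(M)`, i.e. the unique matching of `G` covering exactly `M.verts`. -/
def IsURMatching {V : Type*} (G : SimpleGraph V) (M : G.Subgraph) : Prop :=
  M.IsMatching ∧ ∀ M' : G.Subgraph, M'.IsMatching → M'.verts = M.verts → M' = M

/-- The (ordinary) matching number `ν(G)`: the maximum cardinality of a matching in `G`. -/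
noncomputable def nuMatch {V : Type*} (G : SimpleGraph V) : ℕ :=
  sSup {k : ℕ | ∃ M : G.Subgraph, M.IsMatching ∧ M.edgeSet.ncard = k}

/-- The uniquely restricted matching number `ν_ur(G)`. -/
noncomputable def nuUR {V : Type*} (G : SimpleGraph V) : ℕ :=
  sSup {k : ℕ | ∃ M : G.Subgraph, IsURMatching G M ∧ M.edgeSet.ncard = k}

/-- The acyclic matching number `ν_ac(G)`. -/
noncomputable def nuAc {V : Type*} (G : SimpleGraph V) : ℕ :=
  sSup {k : ℕ | ∃ M : G.Subgraph, IsAcyclicMatching G M ∧ M.edgeSet.ncard = k}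

/-- The induced (strong) matching number `ν_s(G)`. -/
noncomputable def nuS {V : Type*} (G : SimpleGraph V) : ℕ :=
  sSup {k : ℕ | ∃ M : G.Subgraph, IsInducedMatching G M ∧ M.edgeSet.ncard = k}

/-- `cyc` is an `M`-alternating cycle in `G`: a cycle of `G` whose edges alternate between
edges of `M` and edges of `E(G) \ M`. -/
def IsAltCycle {V : Type*} (G : SimpleGraph V) (M : G.Subgraph) {v : V}
    (cyc : G.Walk v v) : Prop :=
  cyc.IsCycle ∧ cyc.toSubgraph.spanningCoe.IsAlternating M.spanningCoe

/-- Vertices of the graph `G(Γ)` for the SATISFIABILITY instance `Γ` with `n` variables and `m`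
clauses: `Sum.inl (i, 0) = t_i`, `Sum.inl (i, 1) = f_i`, `Sum.inl (i, 2) = u_i` are the vertices
of the triangle `X_i`; `Sum.inr (j, none) = v_j`, and `Sum.inr (j, some l)` is the vertex of the
clique `C_j` identified with the literal `l` (it is isolated unless `l` belongs to `c_j`, so that
the clique `C_j` effectively has `|c_j| + 1` vertices). A literal `(i, true)` is `x_i` and a
literal `(i, false)` is `¬x_i`. -/
abbrev SatV (n m : ℕ) : Type := (Fin n × Fin 3) ⊕ (Fin m × Option (Fin n × Bool))

/-- The base relation for `G(Γ)`: all edges inside each triangle `X_i`, all edges inside each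
clique `C_j`, an edge from `f_i` to every vertex identified with the literal `x_i`, and an edge
from `t_i` to every vertex identified with the literal `¬x_i`. -/
def satRel {n m : ℕ} (c : Fin m → Finset (Fin n × Bool)) : SatV n m → SatV n m → Prop
  | Sum.inl (i, k), Sum.inl (i', k') => i = i' ∧ k ≠ k'
  | Sum.inr (j, o), Sum.inr (j', o') =>
      j = j' ∧ o ≠ o' ∧ (∀ l, o = some l → l ∈ c j) ∧ (∀ l, o' = some l → l ∈ c j)
  | Sum.inl (i, k), Sum.inr (j, o) =>
      (k = 1 ∧ o = some (i, true) ∧ (i, true) ∈ c j) ∨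
      (k = 0 ∧ o = some (i, false) ∧ (i, false) ∈ c j)
  | Sum.inr _, Sum.inl _ => False

/-- The graph `G(Γ)` built from the SATISFIABILITY instance `Γ` whose clauses are given by `c`. -/
def satGraph {n m : ℕ} (c : Fin m → Finset (Fin n × Bool)) : SimpleGraph (SatV n m) :=
  SimpleGraph.fromRel (satRel c)

/-!
The triangles `X_i` and the cliques `C_j` (without their isolated literal vertices) partition the
non-isolated vertices of `G(Γ)` into `n + m` cliques, the *blocks*. Two edges of an induced
matching `M` meeting the same block are equal, so `|M| ≤ n + m`, and if equality holds then every
edge of `M` lies inside a block and every block contains an edge of `M`. A literal vertex of `C_j`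
covered by `M` is not adjacent to a covered vertex of another block: for `x_i` this forces
`f_i ∉ V(M)`, hence `u_i t_i ∈ M`; for `¬x_i` it forces `t_i ∉ V(M)`, hence `u_i t_i ∉ M`. So
`x_i ↦ [u_i t_i ∈ M]` satisfies `Γ`. Finally, where `M` uses `t_i f_i`, replacing `t_i` by `u_i`
keeps `M` an induced matching of the same size, because `u_i`, unlike `t_i`, has no neighbour
outside `X_i`.
-/

section InducedMatching

variable {V : Type*} {G : SimpleGraph V} {M : G.Subgraph}

theorem isInducedMatching_iff : IsInducedMatching G M ↔ M.IsMatching ∧ M.IsInduced := by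
  refine and_congr_right fun hM => ⟨fun h v hv w hw hvw => ?_, fun h v => ?_⟩
  · obtain ⟨p, hvp, -⟩ := hM hv
    obtain ⟨_, -, hu⟩ := h ⟨v, hv⟩
    obtain rfl : w = p := congrArg Subtype.val
      ((hu ⟨w, hw⟩ hvw).trans (hu ⟨p, hvp.snd_mem⟩ hvp.adj_sub).symm)
    exact hvp
  · obtain ⟨p, hvp, hu⟩ := hM v.2
    exact ⟨⟨p, hvp.snd_mem⟩, hvp.adj_sub, fun w hvw => Subtype.ext (hu w (h v.2 w.2 hvw))⟩

theorem SimpleGraph.Subgraph.IsMatching.eq_of_mem_edgeSet {e e' : Sym2 V} {v : V}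
    (hM : M.IsMatching) (he : e ∈ M.edgeSet) (he' : e' ∈ M.edgeSet) (hv : v ∈ e)
    (hv' : v ∈ e') : e = e' := by
  obtain ⟨w, rfl⟩ := Sym2.mem_iff_exists.mp hv
  obtain ⟨w', rfl⟩ := Sym2.mem_iff_exists.mp hv'
  rw [hM.eq_of_adj_left (Subgraph.mem_edgeSet.mp he) (Subgraph.mem_edgeSet.mp he')]

theorem SimpleGraph.Subgraph.IsMatching.mem_support {v : V} (hM : M.IsMatching)
    (hv : v ∈ M.verts) : v ∈ G.support :=
  let ⟨w, hvw, _⟩ := hM hv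
  ⟨w, hvw.adj_sub⟩

theorem IsInducedMatching.eq_of_adj_of_mem {a b x : V} (hM : IsInducedMatching G M)
    (hab : M.Adj a b) (hx : x ∈ M.verts) (hxa : G.Adj x a) : x = b :=
  hM.1.eq_of_adj_right ((isInducedMatching_iff.mp hM).2 hx hab.fst_mem hxa) hab.symm

theorem exists_isInducedMatching_ncard_eq_nuS [Finite V] (G : SimpleGraph V) :
    ∃ M : G.Subgraph, IsInducedMatching G M ∧ M.edgeSet.ncard = nuS G := by
  refine Nat.sSup_mem (s := {k | ∃ M : G.Subgraph, IsInducedMatching G M ∧ M.edgeSet.ncard = k})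
    ⟨0, ⊥, isInducedMatching_iff.mpr ⟨?_, ?_⟩, by simp⟩
    ⟨Nat.card (Sym2 V), fun _ ⟨M, _, hM⟩ => hM ▸ Set.ncard_le_card _⟩
  · simp [Subgraph.IsMatching]
  · simp [Subgraph.IsInduced]

theorem IsInducedMatching.induce_preimage (hM : IsInducedMatching G M) (σ : V ≃ V)
    (hσ : ∀ v w, σ v ∈ M.verts → σ w ∈ M.verts → (G.Adj (σ v) (σ w) ↔ G.Adj v w)) :
    (∀ v w, ((⊤ : G.Subgraph).induce (σ ⁻¹' M.verts)).Adj v w ↔ M.Adj (σ v) (σ w)) ∧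
    IsInducedMatching G ((⊤ : G.Subgraph).induce (σ ⁻¹' M.verts)) ∧
    ((⊤ : G.Subgraph).induce (σ ⁻¹' M.verts)).edgeSet.ncard = M.edgeSet.ncard := by
  set M' := (⊤ : G.Subgraph).induce (σ ⁻¹' M.verts)
  obtain ⟨hMm, hMi⟩ := isInducedMatching_iff.mp hM
  have hadj : ∀ v w, M'.Adj v w ↔ M.Adj (σ v) (σ w) := fun v w =>
    ⟨fun ⟨hv, hw, hvw⟩ => hMi hv hw ((hσ v w hv hw).mpr hvw),
      fun h => ⟨h.fst_mem, h.snd_mem, (hσ v w h.fst_mem h.snd_mem).mp h.adj_sub⟩⟩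
  refine ⟨hadj, isInducedMatching_iff.mpr ⟨fun v hv => ?_, ?_⟩, ?_⟩
  · obtain ⟨p, hvp, hu⟩ := hMm hv
    refine ⟨σ.symm p, (hadj _ _).mpr (by simpa using hvp), fun w hw => ?_⟩
    rw [← hu _ ((hadj _ _).mp hw), Equiv.symm_apply_apply]
  · exact (Subgraph.isInduced_iff_exists_eq_induce_top M').mpr ⟨_, rfl⟩
  · have hE : M'.edgeSet = Sym2.map σ ⁻¹' M.edgeSet := by
      ext e
      induction e using Sym2.ind with
      | _ v w => exact hadj v w
    rw [hE, Set.ncard_preimage_of_injective_subset_range (Sym2.map.injective σ.injective)]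
    exact fun e _ => ⟨Sym2.map σ.symm e, by simp [Sym2.map_map]⟩

end InducedMatching

theorem exists_rel_and_rel_unique_of_card_le {α β : Type*} [Finite β] {R : α → β → Prop}
    (hex : ∀ a, ∃ b, R a b) (hinj : ∀ a a' b, R a b → R a' b → a = a')
    (hcard : Nat.card β ≤ Nat.card α) :
    (∀ b, ∃ a, R a b) ∧ ∀ a b b', R a b → R a b' → b = b' := by
  choose f hf using hex
  have hbij : f.Bijective :=
    Function.Injective.bijective_of_nat_card_le (fun a a' h => hinj a a' _ (hf a) (h ▸ hf a')) hcard
  refine ⟨fun b => (hbij.2 b).imp fun a (ha : f a = b) => ha ▸ hf a, fun a b b' hb hb' => ?_⟩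
  obtain ⟨a₁, rfl⟩ := hbij.2 b
  obtain ⟨a₂, rfl⟩ := hbij.2 b'
  rw [hinj _ _ _ (hf a₁) hb, hinj _ _ _ (hf a₂) hb']

namespace SatGraph

variable {n m : ℕ} {c : Fin m → Finset (Fin n × Bool)}

theorem adj_inl_inl {i i' : Fin n} {k k' : Fin 3} :
    (satGraph c).Adj (Sum.inl (i, k)) (Sum.inl (i', k')) ↔ i = i' ∧ k ≠ k' := by
  grind [satGraph, satRel, fromRel_adj]

theorem adj_inl_inr {i : Fin n} {k : Fin 3} {j : Fin m} {o : Option (Fin n × Bool)} :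
    (satGraph c).Adj (Sum.inl (i, k)) (Sum.inr (j, o)) ↔
      k = 1 ∧ o = some (i, true) ∧ (i, true) ∈ c j ∨
      k = 0 ∧ o = some (i, false) ∧ (i, false) ∈ c j := by
  simp [satGraph, satRel]

theorem adj_inr_inr {j j' : Fin m} {o o' : Option (Fin n × Bool)} :
    (satGraph c).Adj (Sum.inr (j, o)) (Sum.inr (j', o')) ↔
      j = j' ∧ o ≠ o' ∧ (∀ l, o = some l → l ∈ c j) ∧ (∀ l, o' = some l → l ∈ c j) := by
  grind [satGraph, satRel, fromRel_adj]

theorem mem_of_mem_support {j : Fin m} {l : Fin n × Bool}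
    (h : Sum.inr (j, some l) ∈ (satGraph c).support) : l ∈ c j := by
  obtain ⟨(⟨i, k⟩ | ⟨j', o⟩), hadj⟩ := ((satGraph c).mem_support).mp h
  · rw [adj_comm, adj_inl_inr] at hadj
    grind
  · exact (adj_inr_inr.mp hadj).2.2.1 l rfl

def block : SatV n m → Fin n ⊕ Fin m := Sum.map Prod.fst Prod.fst

theorem adj_of_block_eq {v w : SatV n m} (hv : v ∈ (satGraph c).support)
    (hw : w ∈ (satGraph c).support) (hne : v ≠ w) (hb : block v = block w) :
    (satGraph c).Adj v w := by
  rcases v with ⟨i, k⟩ | ⟨j, o⟩ <;> rcases w with ⟨i', k'⟩ | ⟨j', o'⟩ <;>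
    simp only [block, Sum.map_inl, Sum.map_inr, Sum.inl.injEq, Sum.inr.injEq, reduceCtorEq] at hb
  · subst hb
    exact adj_inl_inl.mpr ⟨rfl, fun h => hne (h ▸ rfl)⟩
  · subst hb
    refine adj_inr_inr.mpr ⟨rfl, fun h => hne (h ▸ rfl), ?_, ?_⟩ <;>
      rintro l rfl <;> exact mem_of_mem_support ‹_›

structure IsBlockPerfect (M : (satGraph c).Subgraph) : Prop where
  block_eq : ∀ ⦃v w⦄, M.Adj v w → block v = block w
  exists_adj : ∀ β, ∃ v w, M.Adj v w ∧ block v = β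

variable {M : (satGraph c).Subgraph}

theorem eq_of_mem_edgeSet_of_block_eq (hM : IsInducedMatching (satGraph c) M)
    {e e' : Sym2 (SatV n m)} (he : e ∈ M.edgeSet) (he' : e' ∈ M.edgeSet) {v w : SatV n m}
    (hv : v ∈ e) (hw : w ∈ e') (hb : block v = block w) : e = e' := by
  obtain ⟨hMm, hMi⟩ := isInducedMatching_iff.mp hM
  have hvM := M.mem_verts_of_mem_edge he hv
  have hwM := M.mem_verts_of_mem_edge he' hw
  by_cases hvw : v = w
  · exact hMm.eq_of_mem_edgeSet he he' hv (hvw ▸ hw)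
  have hvw' : M.Adj v w :=
    hMi hvM hwM (adj_of_block_eq (hMm.mem_support hvM) (hMm.mem_support hwM) hvw hb)
  exact (hMm.eq_of_mem_edgeSet he hvw' hv (Sym2.mem_mk_left v w)).trans
    (hMm.eq_of_mem_edgeSet hvw' he' (Sym2.mem_mk_right v w) hw)

theorem isBlockPerfect_of_ncard_eq (hM : IsInducedMatching (satGraph c) M)
    (hcard : M.edgeSet.ncard = n + m) : IsBlockPerfect M := by
  obtain ⟨hcover, hunique⟩ := exists_rel_and_rel_unique_of_card_le
    (R := fun (e : M.edgeSet) β => ∃ v ∈ (e : Sym2 (SatV n m)), block v = β)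
    (fun e => ⟨_, _, Sym2.out_fst_mem e.1, rfl⟩)
    (fun e e' β ⟨v, hv, hvβ⟩ ⟨w, hw, hwβ⟩ =>
      Subtype.ext (eq_of_mem_edgeSet_of_block_eq hM e.2 e'.2 hv hw (hvβ.trans hwβ.symm)))
    (by simp [Nat.card_coe_set_eq, hcard])
  refine ⟨fun v w hvw => hunique ⟨s(v, w), hvw⟩ _ _ ⟨v, Sym2.mem_mk_left v w, rfl⟩
    ⟨w, Sym2.mem_mk_right v w, rfl⟩, fun β => ?_⟩
  obtain ⟨⟨e, he⟩, v, hv, rfl⟩ := hcover β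
  obtain ⟨w, rfl⟩ := Sym2.mem_iff_exists.mp hv
  exact ⟨v, w, he, rfl⟩

theorem not_adj_of_block_ne (hM : IsInducedMatching (satGraph c) M) (hB : IsBlockPerfect M)
    {v w : SatV n m} (hv : v ∈ M.verts) (hw : w ∈ M.verts) (hb : block v ≠ block w) :
    ¬(satGraph c).Adj v w :=
  fun h => hb (hB.block_eq ((isInducedMatching_iff.mp hM).2 hv hw h))

theorem IsBlockPerfect.adj_t_f_or_adj_u_t_or_adj_u_f (hB : IsBlockPerfect M) (i : Fin n) :
    M.Adj (Sum.inl (i, 0)) (Sum.inl (i, 1)) ∨ M.Adj (Sum.inl (i, 2)) (Sum.inl (i, 0)) ∨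
      M.Adj (Sum.inl (i, 2)) (Sum.inl (i, 1)) := by
  obtain ⟨v, w, hvw, hv⟩ := hB.exists_adj (Sum.inl i)
  have hw := (hB.block_eq hvw).symm.trans hv
  rcases v with ⟨i₁, k⟩ | _ <;> rcases w with ⟨i₂, k'⟩ | _ <;>
    simp only [block, Sum.map_inl, Sum.map_inr, Sum.inl.injEq, reduceCtorEq] at hv hw
  subst hv hw
  have hk := (adj_inl_inl.mp hvw.adj_sub).2
  have hwv := hvw.symm
  fin_cases k <;> fin_cases k' <;> first | exact absurd rfl hk | tauto

theorem IsBlockPerfect.exists_literal (hB : IsBlockPerfect M) (j : Fin m) :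
    ∃ l ∈ c j, Sum.inr (j, some l) ∈ M.verts := by
  obtain ⟨v, w, hvw, hv⟩ := hB.exists_adj (Sum.inr j)
  have hw := (hB.block_eq hvw).symm.trans hv
  rcases v with _ | ⟨j₁, o⟩ <;> rcases w with _ | ⟨j₂, o'⟩ <;>
    simp only [block, Sum.map_inl, Sum.map_inr, Sum.inr.injEq, reduceCtorEq] at hv hw
  subst hv hw
  obtain ⟨-, hne, ho, ho'⟩ := adj_inr_inr.mp hvw.adj_sub
  rcases o with _ | l
  · obtain ⟨l, rfl⟩ := Option.ne_none_iff_exists'.mp hne.symm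
    exact ⟨l, ho' l rfl, hvw.snd_mem⟩
  · exact ⟨l, ho l rfl, hvw.fst_mem⟩

theorem adj_u_t_iff_of_literal_mem (hM : IsInducedMatching (satGraph c) M)
    (hB : IsBlockPerfect M) {j : Fin m} {i : Fin n} {b : Bool}
    (hlit : Sum.inr (j, some (i, b)) ∈ M.verts) :
    M.Adj (Sum.inl (i, 2)) (Sum.inl (i, 0)) ↔ b = true := by
  have hl : (i, b) ∈ c j := mem_of_mem_support (hM.1.mem_support hlit)
  cases b
  · have ht : Sum.inl (i, 0) ∉ M.verts := fun ht =>
      not_adj_of_block_ne hM hB ht hlit (by simp [block]) (adj_inl_inr.mpr (by simp [hl]))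
    simpa using fun h => ht h.snd_mem
  · have hf : Sum.inl (i, 1) ∉ M.verts := fun hf =>
      not_adj_of_block_ne hM hB hf hlit (by simp [block]) (adj_inl_inr.mpr (by simp [hl]))
    simp only [iff_true]
    rcases hB.adj_t_f_or_adj_u_t_or_adj_u_f i with h | h | h
    · exact absurd h.snd_mem hf
    · exact h
    · exact absurd h.snd_mem hf

def swapTU (S : Set (Fin n)) [DecidablePred (· ∈ S)] : Equiv.Perm (SatV n m) :=
  Equiv.sumCongr
    (Equiv.prodShear (Equiv.refl _) fun i => if i ∈ S then Equiv.swap 0 2 else Equiv.refl _)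
    (Equiv.refl _)

section swapTU

variable {S : Set (Fin n)} [DecidablePred (· ∈ S)]

@[simp] theorem swapTU_inl (i : Fin n) (k : Fin 3) :
    swapTU S (Sum.inl (i, k) : SatV n m) =
      Sum.inl (i, if i ∈ S then Equiv.swap 0 2 k else k) := by
  by_cases h : i ∈ S <;> simp [swapTU, Equiv.prodShear, h]

@[simp] theorem swapTU_inl_one (i : Fin n) :
    swapTU S (Sum.inl (i, 1) : SatV n m) = Sum.inl (i, 1) := by
  simp [Equiv.swap_apply_of_ne_of_ne]

@[simp] theorem swapTU_inr (x : Fin m × Option (Fin n × Bool)) :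
    swapTU S (Sum.inr x : SatV n m) = Sum.inr x := rfl

@[simp] theorem block_swapTU (v : SatV n m) : block (swapTU S v) = block v := by
  rcases v with ⟨i, k⟩ | x <;> simp [block]

theorem adj_swapTU_iff (hM : IsInducedMatching (satGraph c) M) (hB : IsBlockPerfect M)
    (hS : ∀ i ∈ S, M.Adj (Sum.inl (i, 0)) (Sum.inl (i, 1))) {v w : SatV n m}
    (hv : swapTU S v ∈ M.verts) (hw : swapTU S w ∈ M.verts) :
    (satGraph c).Adj (swapTU S v) (swapTU S w) ↔ (satGraph c).Adj v w := by
  by_cases hb : block v = block w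
  · rcases v with ⟨i, k⟩ | ⟨j, o⟩ <;> rcases w with ⟨i', k'⟩ | ⟨j', o'⟩ <;>
      simp only [block, Sum.map_inl, Sum.map_inr, Sum.inl.injEq, Sum.inr.injEq,
        reduceCtorEq] at hb
    · subst hb
      simp only [swapTU_inl, adj_inl_inl, true_and]
      split_ifs <;> simp [(Equiv.swap (0 : Fin 3) 2).injective.ne_iff]
    · rfl
  have hcross : ∀ {i k j o}, (satGraph c).Adj (Sum.inl (i, k)) (Sum.inr (j, o)) →
      swapTU S (Sum.inl (i, k)) ∈ M.verts → Sum.inr (j, o) ∈ M.verts → False := by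
    intro i k j o hadj hv hw
    have hfixed : Sum.inl (i, k) ∈ M.verts → False := fun hv' =>
      not_adj_of_block_ne hM hB hv' hw (by simp [block]) hadj
    rcases adj_inl_inr.mp hadj with ⟨rfl, -⟩ | ⟨rfl, -⟩
    · exact hfixed (swapTU_inl_one (S := S) i ▸ hv)
    by_cases hi : i ∈ S
    · rw [swapTU_inl, if_pos hi, Equiv.swap_apply_left] at hv
      exact absurd (hM.eq_of_adj_of_mem (hS i hi) hv (adj_inl_inl.mpr ⟨rfl, by decide⟩)) (by simp)
    · exact hfixed (by simpa [hi] using hv)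
  refine iff_of_false (not_adj_of_block_ne hM hB hv hw (by simpa using hb)) fun hadj => ?_
  rcases v with ⟨i, k⟩ | ⟨j, o⟩ <;> rcases w with ⟨i', k'⟩ | ⟨j', o'⟩
  · exact hb (by simp [block, (adj_inl_inl.mp hadj).1])
  · exact hcross hadj hv hw
  · exact hcross hadj.symm hw hv
  · exact hb (by simp [block, (adj_inr_inr.mp hadj).1])

end swapTU

open Classical in
/-- `M` with `t_i` replaced by `u_i` in every triangle whose `M`-edge is `t_i f_i`. -/
def normalForm (M : (satGraph c).Subgraph) : (satGraph c).Subgraph :=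
  (⊤ : (satGraph c).Subgraph).induce
    (swapTU {i | M.Adj (Sum.inl (i, 0)) (Sum.inl (i, 1))} ⁻¹' M.verts)

open Classical in
theorem normalForm_spec (hM : IsInducedMatching (satGraph c) M) (hB : IsBlockPerfect M) :
    (∀ v w, (normalForm M).Adj v w ↔
      M.Adj (swapTU {i | M.Adj (Sum.inl (i, 0)) (Sum.inl (i, 1))} v)
        (swapTU {i | M.Adj (Sum.inl (i, 0)) (Sum.inl (i, 1))} w)) ∧
    IsInducedMatching (satGraph c) (normalForm M) ∧
    (normalForm M).edgeSet.ncard = M.edgeSet.ncard :=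
  hM.induce_preimage _ fun _ _ => adj_swapTU_iff hM hB fun _ => id

theorem normalForm_adj_u_t_iff (hM : IsInducedMatching (satGraph c) M) (hB : IsBlockPerfect M)
    (i : Fin n) :
    (normalForm M).Adj (Sum.inl (i, 2)) (Sum.inl (i, 0)) ↔
      M.Adj (Sum.inl (i, 2)) (Sum.inl (i, 0)) := by
  classical
  rw [(normalForm_spec hM hB).1]
  by_cases hi : M.Adj (Sum.inl (i, 0)) (Sum.inl (i, 1)) <;> simp [hi, M.adj_comm]

theorem normalForm_adj_u_f_iff (hM : IsInducedMatching (satGraph c) M) (hB : IsBlockPerfect M)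
    (i : Fin n) :
    (normalForm M).Adj (Sum.inl (i, 2)) (Sum.inl (i, 1)) ↔
      ¬M.Adj (Sum.inl (i, 2)) (Sum.inl (i, 0)) := by
  classical
  rw [(normalForm_spec hM hB).1]
  by_cases hi : M.Adj (Sum.inl (i, 0)) (Sum.inl (i, 1))
  · simp only [swapTU_inl, Set.mem_ofPred_eq, if_pos hi, Equiv.swap_apply_right]
    exact iff_of_true hi fun h => absurd (hM.1.eq_of_adj_left hi h.symm) (by simp)
  · simp only [swapTU_inl, Set.mem_ofPred_eq, if_neg hi]
    exact ⟨fun h h' => absurd (hM.1.eq_of_adj_left h h') (by simp),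
      fun h => ((hB.adj_t_f_or_adj_u_t_or_adj_u_f i).resolve_left hi).resolve_left h⟩

end SatGraph

open SatGraph

theorem satisfiable_of_nuS_eq {n m : ℕ} (c : Fin m → Finset (Fin n × Bool))
    (hs : nuS (satGraph c) = n + m) :
    (∃ t : Fin n → Bool, ∀ j, ∃ l ∈ c j, t l.1 = l.2) ∧
    ∃ M : (satGraph c).Subgraph, IsInducedMatching (satGraph c) M ∧
      M.edgeSet.ncard = nuS (satGraph c) ∧
      (∀ i : Fin n,
        M.Adj (Sum.inl (i, 2)) (Sum.inl (i, 1)) ∨ M.Adj (Sum.inl (i, 2)) (Sum.inl (i, 0))) ∧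
      ∃ t : Fin n → Bool,
        (∀ i : Fin n, (t i = false ↔ M.Adj (Sum.inl (i, 2)) (Sum.inl (i, 1))) ∧
          (t i = true ↔ M.Adj (Sum.inl (i, 2)) (Sum.inl (i, 0)))) ∧
        ∀ j, ∃ l ∈ c j, t l.1 = l.2 := by
  classical
  obtain ⟨M, hM, hcard⟩ := exists_isInducedMatching_ncard_eq_nuS (satGraph c)
  have hB := isBlockPerfect_of_ncard_eq hM (hcard.trans hs)
  obtain ⟨-, hM', hcard'⟩ := normalForm_spec hM hB
  let t : Fin n → Bool := fun i => decide (M.Adj (Sum.inl (i, 2)) (Sum.inl (i, 0)))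
  have hsat : ∀ j, ∃ l ∈ c j, t l.1 = l.2 := fun j =>
    let ⟨l, hl, hlM⟩ := hB.exists_literal j
    ⟨l, hl, by simp [t, adj_u_t_iff_of_literal_mem hM hB hlM]⟩
  refine ⟨⟨t, hsat⟩, normalForm M, hM', hcard'.trans hcard, fun i => ?_, t, fun i => ?_, hsat⟩
  · rw [normalForm_adj_u_f_iff hM hB, normalForm_adj_u_t_iff hM hB]
    exact (em _).symm
  · simp [t, normalForm_adj_u_f_iff hM hB, normalForm_adj_u_t_iff hM hB]
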